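/- For all nonnegative integers a_1, a_2, b, the function f satisfies Σ_{b_1 + b_2 = b} f(a_1, b_1) · f(a_2 + 1, b_2) = Σ_{b_1 + b_2 = b} f(a_1 + 1, b_1) · f(a_2, b_2), where the sums range over all pairs of nonnegative integers (b_1, b_2) with b_1 + b_2 = b. -/

import Mathlib

/-!
With `C` the Catalan generating function and `F a = ∑_b f(a,b) X^b`, the recursion reads
`F (a + 2) = F (a + 1) - X F a` with `F 0 = C` and `F 1 = 1`. Since `C = 1 + X C²`, the series
`r = 1 - X C` is the inverse of `C` and satisfies `r² = r - X`, so `F a = C rᵃ`. Hence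
`F a₁ · F (a₂ + 1) = C² r^(a₁ + a₂ + 1) = F (a₁ + 1) · F a₂`, and the theorem is the `b`-th
coefficient of this identity.
-/

/-- The recursively defined function `f : ℕ × ℕ → ℤ` with `f(0,b) = C_b` (the `b`-th Catalan
number), `f(a,0) = 1`, `f(1,b) = 0` for `b > 0`, and
`f(a,b) = f(a-1,b) - f(a-2,b-1)` for `a > 1`, `b > 0`. -/
def catf : ℕ → ℕ → ℤ
  | 0, b => (catalan b : ℤ)
  | _ + 1, 0 => 1
  | 1, _ + 1 => 0
  | a + 2, b + 1 => catf (a + 1) (b + 1) - catf a b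

open PowerSeries

theorem eq_mul_pow_of_two_step_rec {R : Type*} [CommSemiring R] {u : ℕ → R} {p q r : R}
    (hrec : ∀ n, u (n + 2) = p * u (n + 1) + q * u n) (h1 : u 1 = u 0 * r)
    (hr : r ^ 2 = p * r + q) (n : ℕ) : u n = u 0 * r ^ n := by
  induction n using Nat.twoStepInduction with
  | zero => rw [pow_zero, mul_one]
  | one => rw [pow_one, h1]
  | more n ih₀ ih₁ =>
    calc u (n + 2) = u 0 * r ^ n * (p * r + q) := by rw [hrec, ih₀, ih₁]; ring
      _ = u 0 * r ^ (n + 2) := by rw [← hr]; ring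

noncomputable def catfSeries (a : ℕ) : ℤ⟦X⟧ := mk (catf a)

noncomputable abbrev intCatalanSeries : ℤ⟦X⟧ := map (Nat.castRingHom ℤ) catalanSeries

theorem intCatalanSeries_eq : intCatalanSeries = 1 + X * intCatalanSeries ^ 2 := by
  have h := congrArg (map (Nat.castRingHom ℤ)) catalanSeries_sq_mul_X_add_one
  rw [map_add, map_mul, map_pow, map_X, map_one] at h
  linear_combination -h

theorem catfSeries_zero : catfSeries 0 = intCatalanSeries := by
  ext b
  simp [catfSeries, catf, catalanSeries_coeff]

theorem catfSeries_one : catfSeries 1 = 1 := by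
  ext b
  cases b <;> simp [catfSeries, catf, coeff_one]

theorem catfSeries_add_two (a : ℕ) :
    catfSeries (a + 2) = catfSeries (a + 1) - X * catfSeries a := by
  ext b
  cases b <;> simp [catfSeries, catf, coeff_succ_X_mul]

theorem catfSeries_eq (a : ℕ) :
    catfSeries a = intCatalanSeries * (1 - X * intCatalanSeries) ^ a := by
  have hC := intCatalanSeries_eq
  have hrec (n : ℕ) : catfSeries (n + 2) = 1 * catfSeries (n + 1) + -X * catfSeries n := by
    rw [catfSeries_add_two]; ring
  have h1 : catfSeries 1 = catfSeries 0 * (1 - X * intCatalanSeries) := by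
    rw [catfSeries_one, catfSeries_zero]
    linear_combination -hC
  have hr : (1 - X * intCatalanSeries) ^ 2 = 1 * (1 - X * intCatalanSeries) + -X := by
    linear_combination -X * hC
  rw [eq_mul_pow_of_two_step_rec hrec h1 hr, catfSeries_zero]

/-- For all nonnegative integers `a₁, a₂, b`,
`∑_{b₁+b₂=b} f(a₁,b₁)·f(a₂+1,b₂) = ∑_{b₁+b₂=b} f(a₁+1,b₁)·f(a₂,b₂)`. -/
theorem catf_convolution_symm (a₁ a₂ b : ℕ) :
    ∑ p ∈ Finset.HasAntidiagonal.antidiagonal b, catf a₁ p.1 * catf (a₂ + 1) p.2 =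
      ∑ p ∈ Finset.HasAntidiagonal.antidiagonal b, catf (a₁ + 1) p.1 * catf a₂ p.2 := by
  have h : catfSeries a₁ * catfSeries (a₂ + 1) = catfSeries (a₁ + 1) * catfSeries a₂ := by
    simp only [catfSeries_eq]
    ring
  simpa [coeff_mul, catfSeries] using congrArg (coeff b) h
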